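/- Let T ⊂ PG(3,3) be the 8-point configuration {e₀, e₀+e₃, e₁, e₁+e₃, e₂, e₂+e₃, e₀+e₁+e₂, e₀−e₁−e₂+e₃}. Then the space I₂(T) of quadratic forms vanishing on T is 2-dimensional with basis {X₁(X₂−X₀) + X₃(X₀+X₁+X₂−X₃), X₀(X₂−X₁)}, and V(I₂(T)) = T; hence T is a maximal configuration of rank 8 in PG(3,3). -/

import Mathlib

/-!
A quadratic form is `∑ cᵢⱼ XᵢXⱼ`, so vanishing at the eight points of `T` imposes eight linear
conditions on the ten symmetrised coefficients `cᵢⱼ + cⱼᵢ`; over `𝔽₃` they have rank 8 and cut out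
exactly the span of the two given forms, which are independent. The common zeros of these two
forms in `𝔽₃⁴ \ 0` are, by exhaustive check, the vectors `±v` for the eight representatives `v`
of `T`, so `V(I₂(T)) = T`.
-/

open MvPolynomial

noncomputable section

/-- `PG3 F` is the projective space `PG(3, F)`. -/
abbrev PG3 (F : Type*) [Field F] := Projectivization F (Fin 4 → F)

/-- `I2 F S` is the space of quadratic forms in `X₀,…,X₃` vanishing on `S ⊆ PG(3,F)`. -/
def I2 (F : Type*) [Field F] (S : Set (PG3 F)) : Submodule F (MvPolynomial (Fin 4) F) :=
  homogeneousSubmodule (Fin 4) F 2 ⊓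
    ⨅ p ∈ S, LinearMap.ker ((aeval p.rep : MvPolynomial (Fin 4) F →ₐ[F] F).toLinearMap)

/-- the rank of a configuration `S ⊆ PG(3,F)`: `10 − dim I₂(S)`. -/
def rk (F : Type*) [Field F] (S : Set (PG3 F)) : ℕ :=
  10 - Module.finrank F (I2 F S)

/-- `Vz F I` is the common zero locus in `PG(3,F)` of the set `I` of polynomials. -/
def Vz (F : Type*) [Field F] (I : Set (MvPolynomial (Fin 4) F)) : Set (PG3 F) :=
  {p | ∀ f ∈ I, eval p.rep f = 0}

/-- the point of `PG(3,3)` with the given (nonzero) coordinate vector. -/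
def pt (v : Fin 4 → ZMod 3) (h : v ≠ 0) : PG3 (ZMod 3) := Projectivization.mk (ZMod 3) v h


namespace MvPolynomial

variable {σ R : Type*} [CommSemiring R]

lemma homogeneousSubmodule_two_eq_span :
    homogeneousSubmodule σ R 2 = Submodule.span R (Set.range fun p : σ × σ => X p.1 * X p.2) := by
  rw [← homogeneousSubmodule_one_pow, pow_two, homogeneousSubmodule_one_eq_span_X,
    Submodule.span_mul_span]
  congr 1
  ext f
  simp [Set.mem_mul]

lemma IsHomogeneous.exists_sum_smul_X_mul_X [Fintype σ] {f : MvPolynomial σ R}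
    (hf : f.IsHomogeneous 2) : ∃ c : σ × σ → R, ∑ p, c p • (X p.1 * X p.2) = f := by
  rw [← mem_homogeneousSubmodule, homogeneousSubmodule_two_eq_span] at hf
  exact (Submodule.mem_span_range_iff_exists_fun R).mp hf

lemma IsHomogeneous.eval_smul {f : MvPolynomial σ R} {n : ℕ} (hf : f.IsHomogeneous n)
    (c : R) (v : σ → R) : eval (c • v) f = c ^ n * eval v f := by
  rw [eval_eq, eval_eq, Finset.mul_sum]
  refine Finset.sum_congr rfl fun d hd => ?_
  have hdeg : ∑ i ∈ d.support, d i = n := by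
    simpa [Finsupp.weight_apply, Finsupp.sum] using hf (mem_support_iff.mp hd)
  simp only [Pi.smul_apply, smul_eq_mul, mul_pow, Finset.prod_mul_distrib,
    Finset.prod_pow_eq_pow_sum, hdeg]
  ring

lemma IsHomogeneous.eval_rep_mk_eq_zero_iff {K : Type*} [Field K] {f : MvPolynomial σ K} {n : ℕ}
    (hf : f.IsHomogeneous n) {v : σ → K} (hv : v ≠ 0) :
    eval (Projectivization.mk K v hv).rep f = 0 ↔ eval v f = 0 := by
  obtain ⟨c, hc⟩ := Projectivization.exists_smul_eq_mk_rep K v hv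
  rw [← hc, Units.smul_def, hf.eval_smul]
  simp

lemma IsHomogeneous.forall_mem_range_eval_rep_eq_zero_iff {K ι : Type*} [Field K]
    {f : MvPolynomial σ K} {n : ℕ} (hf : f.IsHomogeneous n) {w : ι → σ → K} (hw : ∀ i, w i ≠ 0) :
    (∀ p ∈ Set.range fun i => Projectivization.mk K (w i) (hw i), eval p.rep f = 0) ↔
      ∀ i, eval (w i) f = 0 := by
  simp only [Set.forall_mem_range]
  exact forall_congr' fun i => hf.eval_rep_mk_eq_zero_iff (hw i)

end MvPolynomial

section

variable {F : Type*} [Field F]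

lemma mem_I2_iff {S : Set (PG3 F)} {f : MvPolynomial (Fin 4) F} :
    f ∈ I2 F S ↔ f.IsHomogeneous 2 ∧ ∀ p ∈ S, eval p.rep f = 0 := by
  simp [I2, Submodule.mem_iInf]

lemma subset_Vz_I2 (S : Set (PG3 F)) : S ⊆ Vz F (I2 F S) :=
  fun p hp _ hf => (mem_I2_iff.mp hf).2 p hp

end

def configTRep : Fin 8 → Fin 4 → ZMod 3 :=
  ![![1, 0, 0, 0], ![1, 0, 0, 1], ![0, 1, 0, 0], ![0, 1, 0, 1],
    ![0, 0, 1, 0], ![0, 0, 1, 1], ![1, 1, 1, 0], ![1, -1, -1, 1]]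

lemma configTRep_ne_zero : ∀ i, configTRep i ≠ 0 := by decide

def configT : Set (PG3 (ZMod 3)) := Set.range fun i => pt (configTRep i) (configTRep_ne_zero i)

lemma configT_eq : configT = {pt ![1, 0, 0, 0] (by decide), pt ![1, 0, 0, 1] (by decide),
    pt ![0, 1, 0, 0] (by decide), pt ![0, 1, 0, 1] (by decide),
    pt ![0, 0, 1, 0] (by decide), pt ![0, 0, 1, 1] (by decide),
    pt ![1, 1, 1, 0] (by decide), pt ![1, -1, -1, 1] (by decide)} := by
  ext p
  simp only [configT, Set.mem_range, Fin.exists_fin_succ, Fin.exists_fin_zero, Set.mem_insert_iff,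
    Set.mem_singleton_iff, or_false, @eq_comm _ p]
  rfl

lemma forall_mem_configT_eval_rep_eq_zero_iff {f : MvPolynomial (Fin 4) (ZMod 3)}
    (hf : f.IsHomogeneous 2) : (∀ p ∈ configT, eval p.rep f = 0) ↔ ∀ i, eval (configTRep i) f = 0 :=
  hf.forall_mem_range_eval_rep_eq_zero_iff configTRep_ne_zero

def q₁ : MvPolynomial (Fin 4) (ZMod 3) := X 1 * (X 2 - X 0) + X 3 * (X 0 + X 1 + X 2 - X 3)

def q₂ : MvPolynomial (Fin 4) (ZMod 3) := X 0 * (X 2 - X 1)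

lemma eval_q₁ (v : Fin 4 → ZMod 3) :
    eval v q₁ = v 1 * (v 2 - v 0) + v 3 * (v 0 + v 1 + v 2 - v 3) := by
  simp [q₁]

lemma eval_q₂ (v : Fin 4 → ZMod 3) : eval v q₂ = v 0 * (v 2 - v 1) := by
  simp [q₂]

lemma isHomogeneous_q₁ : q₁.IsHomogeneous 2 :=
  ((isHomogeneous_X _ 1).mul ((isHomogeneous_X _ 2).sub (isHomogeneous_X _ 0))).add
    ((isHomogeneous_X _ 3).mul
      ((((isHomogeneous_X _ 0).add (isHomogeneous_X _ 1)).add (isHomogeneous_X _ 2)).sub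
        (isHomogeneous_X _ 3)))

lemma isHomogeneous_q₂ : q₂.IsHomogeneous 2 :=
  (isHomogeneous_X _ 0).mul ((isHomogeneous_X _ 2).sub (isHomogeneous_X _ 1))

lemma q₁_mem_I2_configT : q₁ ∈ I2 (ZMod 3) configT :=
  mem_I2_iff.mpr ⟨isHomogeneous_q₁, (forall_mem_configT_eval_rep_eq_zero_iff isHomogeneous_q₁).mpr
    (by simp only [eval_q₁]; decide)⟩

lemma q₂_mem_I2_configT : q₂ ∈ I2 (ZMod 3) configT :=
  mem_I2_iff.mpr ⟨isHomogeneous_q₂, (forall_mem_configT_eval_rep_eq_zero_iff isHomogeneous_q₂).mpr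
    (by simp only [eval_q₂]; decide)⟩

lemma sum_smul_X_mul_X_mem_span_q₁_q₂ (c : Fin 4 × Fin 4 → ZMod 3)
    (h : ∀ i, eval (configTRep i) (∑ p, c p • (X p.1 * X p.2)) = 0) :
    ∑ p, c p • (X p.1 * X p.2) ∈ Submodule.span (ZMod 3) {q₁, q₂} := by
  simp only [Fin.forall_fin_succ, configTRep, Fintype.sum_prod_type, Fin.sum_univ_four,
    Fin.isValue, map_add, smul_eval, map_mul, eval_X, Matrix.cons_val', Matrix.cons_val_zero,
    Matrix.cons_val_fin_one, Matrix.cons_val_one, Matrix.cons_val, Matrix.cons_val_succ, mul_one,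
    mul_zero, add_zero, zero_add, mul_neg, neg_neg, forall_const] at h
  obtain ⟨h0, h1, h2, h3, h4, h5, h6, h7⟩ := h
  have hc30 : c (3, 0) = -c (3, 3) - c (0, 3) := by linear_combination h1 - h0
  have hc31 : c (3, 1) = -c (3, 3) - c (1, 3) := by linear_combination h3 - h2
  have hc32 : c (3, 2) = -c (3, 3) - c (2, 3) := by linear_combination h5 - h4
  -- `h6 + h7` only yields `2 (c₁₂ + c₂₁ + c₃₃) = 0`; multiplying by `2 = -1` needs `3 = 0`
  have hc21 : c (2, 1) = -c (3, 3) - c (1, 2) := by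
    linear_combination (norm := skip) -(h6 + h7) + h0 + h1 - h3 - h5
    ring_nf
    reduce_mod_char
  have hc10 : c (1, 0) = c (3, 3) - c (0, 2) - c (2, 0) - c (0, 1) := by
    linear_combination h6 - h0 - h2 - h4 - hc21
  rw [Submodule.mem_span_pair]
  refine ⟨-c (3, 3), c (0, 2) + c (2, 0), ?_⟩
  simp only [Fintype.sum_prod_type, Fin.sum_univ_four, q₁, q₂]
  rw [h0, h2, h4, hc30, hc31, hc32, hc21, hc10]
  simp only [smul_eq_C_mul, map_neg, map_add, map_sub, map_zero]
  ring

lemma I2_configT_eq_span : I2 (ZMod 3) configT = Submodule.span (ZMod 3) {q₁, q₂} := by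
  refine le_antisymm (fun f hf => ?_) ?_
  · obtain ⟨hhom, hvan⟩ := mem_I2_iff.mp hf
    obtain ⟨c, rfl⟩ := hhom.exists_sum_smul_X_mul_X
    exact sum_smul_X_mul_X_mem_span_q₁_q₂ c ((forall_mem_configT_eval_rep_eq_zero_iff hhom).mp hvan)
  · rw [Submodule.span_le, Set.insert_subset_iff, Set.singleton_subset_iff]
    exact ⟨q₁_mem_I2_configT, q₂_mem_I2_configT⟩

lemma linearIndependent_q₁_q₂ : LinearIndependent (ZMod 3) ![q₁, q₂] := by
  rw [LinearIndependent.pair_iff]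
  intro s t hst
  constructor
  · simpa [eval_q₁, eval_q₂] using congrArg (eval ![0, 0, 0, 1]) hst
  · simpa [eval_q₁, eval_q₂] using congrArg (eval ![1, 0, 1, 0]) hst

lemma finrank_I2_configT : Module.finrank (ZMod 3) (I2 (ZMod 3) configT) = 2 := by
  rw [I2_configT_eq_span, ← Matrix.range_cons_cons_empty q₁ q₂ ![],
    finrank_span_eq_card linearIndependent_q₁_q₂, Fintype.card_fin]

lemma exists_eq_configTRep_of_eval_q₁_q₂ : ∀ v : Fin 4 → ZMod 3, v ≠ 0 →
    eval v q₁ = 0 → eval v q₂ = 0 → ∃ i, v = configTRep i ∨ v = -configTRep i := by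
  simp only [eval_q₁, eval_q₂]
  decide

lemma Vz_I2_configT : Vz (ZMod 3) (I2 (ZMod 3) configT) = configT := by
  refine Set.Subset.antisymm (fun p hp => ?_) (subset_Vz_I2 configT)
  obtain ⟨i, hi⟩ := exists_eq_configTRep_of_eval_q₁_q₂ p.rep p.rep_nonzero
    (hp q₁ q₁_mem_I2_configT) (hp q₂ q₂_mem_I2_configT)
  refine ⟨i, ?_⟩
  show Projectivization.mk _ _ _ = p
  rw [← p.mk_rep, Projectivization.mk_eq_mk_iff']
  rcases hi with hi | hi
  exacts [⟨1, by rw [hi, one_smul]⟩, ⟨-1, by rw [hi, neg_one_smul, neg_neg]⟩]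

theorem stmt19 (T : Set (PG3 (ZMod 3)))
    (hT : T = {pt ![1, 0, 0, 0] (by decide), pt ![1, 0, 0, 1] (by decide),
               pt ![0, 1, 0, 0] (by decide), pt ![0, 1, 0, 1] (by decide),
               pt ![0, 0, 1, 0] (by decide), pt ![0, 0, 1, 1] (by decide),
               pt ![1, 1, 1, 0] (by decide), pt ![1, -1, -1, 1] (by decide)}) :
    I2 (ZMod 3) T = Submodule.span (ZMod 3)
      {X 1 * (X 2 - X 0) + X 3 * (X 0 + X 1 + X 2 - X 3), X 0 * (X 2 - X 1)} ∧
    Module.finrank (ZMod 3) (I2 (ZMod 3) T) = 2 ∧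
    Vz (ZMod 3) (I2 (ZMod 3) T) = T ∧
    rk (ZMod 3) T = 8 := by
  rw [hT, ← configT_eq]
  refine ⟨I2_configT_eq_span, finrank_I2_configT, Vz_I2_configT, ?_⟩
  rw [rk, finrank_I2_configT]
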